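/- Let a ≥ 2 be an integer and let x ∈ {0, 1, …, l_a − 1}. Then the least element of S(a) congruent to x modulo l_a is β(x)·l_a + x; equivalently, the element of the Apéry set Ap(S(a), l_a) = {s ∈ S(a) : s − l_a ∉ S(a)} lying in the residue class of x modulo l_a is β(x)·l_a + x. -/

import Mathlib

/-- The Lucas sequence: l 0 = 2, l 1 = 1, l (n+2) = l (n+1) + l n. -/
def lucas : ℕ → ℕ
  | 0 => 2
  | 1 => 1
  | n + 2 => lucas (n + 1) + lucas n

/-- The modified (monotone) Lucas sequence: l̃ 0 = 1, l̃ 1 = 2, l̃ n = l n for n ≥ 2. -/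
def ltil : ℕ → ℕ
  | 0 => 1
  | 1 => 2
  | n + 2 => lucas (n + 2)

/-- β x : minimal number of summands in a representation of x as a sum of
modified Lucas numbers (with repetitions allowed). -/
noncomputable def beta (x : ℕ) : ℕ :=
  sInf {s : ℕ | ∃ k : ℕ, ∃ b : ℕ → ℕ,
    x = ∑ i ∈ Finset.range (k + 1), b i * ltil i ∧ s = ∑ i ∈ Finset.range (k + 1), b i}

/-- γ x : the greatest k with l̃ k ≤ x (for x ≥ 1). -/
noncomputable def gamma (x : ℕ) : ℕ := sSup {k : ℕ | ltil k ≤ x}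

/-- S a : the additive submonoid of ℕ generated by {l_a} ∪ {l_a + l_n : n ∈ ℕ}. -/
def Sset (a : ℕ) : AddSubmonoid ℕ :=
  AddSubmonoid.closure ({lucas a} ∪ {x : ℕ | ∃ n : ℕ, x = lucas a + lucas n})

/-- T a : the additive submonoid of ℕ generated by {l_a + l_n : n ∈ ℕ}. -/
def Tset (a : ℕ) : AddSubmonoid ℕ :=
  AddSubmonoid.closure {x : ℕ | ∃ n : ℕ, x = lucas a + lucas n}

/-!
Write `n = l_a`. For an optimal representation `x = l̃_{i₁} + ⋯ + l̃_{iₘ}` with `m = β x`, the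
number `β(x)·n + x = ∑ (n + l̃_{iⱼ})` is a sum of generators of `S(a)`.

Conversely, the inequality `β(s mod n)·n + (s mod n) ≤ s` holds for every generator and is stable
under addition, because `r ↦ β(r mod n)` is subadditive. The subadditivity rests on greedy
optimality of the coin system `l̃`: if a carry occurs, the sum lies in `[l̃_a, l̃_{a+2})`, and
there removing `l̃_a` does not increase `β`. For the generators `n + l_j` with `j ≥ a`, use
`l_{a+m} = F_m·l_{a-1} + F_{m+1}·l_a`.
-/

open Multiset

lemma lucas_pos : ∀ n, 0 < lucas n
  | 0 | 1 => by decide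
  | n + 2 => Nat.add_pos_right _ (lucas_pos n)

lemma lucas_add_two (n : ℕ) : lucas (n + 2) = lucas (n + 1) + lucas n := rfl

lemma lucas_add (m n : ℕ) :
    lucas (m + n + 1) = Nat.fib m * lucas n + Nat.fib (m + 1) * lucas (n + 1) := by
  induction m using Nat.twoStepInduction with
  | zero => simp
  | one =>
    rw [show 1 + n + 1 = n + 2 by omega, lucas_add_two]
    simp [add_comm]
  | more m ih₀ ih₁ =>
    rw [show m + 2 + n + 1 = m + n + 1 + 2 by omega, lucas_add_two,
      show m + n + 1 + 1 = m + 1 + n + 1 by omega, ih₀, ih₁]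
    simp only [Nat.fib_add_two]
    ring

lemma ltil_eq_lucas {n : ℕ} (hn : 2 ≤ n) : ltil n = lucas n := by
  obtain ⟨m, rfl⟩ := Nat.exists_eq_add_of_le' hn
  rfl

lemma ltil_add_two {n : ℕ} (hn : 2 ≤ n) : ltil (n + 2) = ltil (n + 1) + ltil n := by
  rw [ltil_eq_lucas (by omega), ltil_eq_lucas (by omega), ltil_eq_lucas hn, lucas_add_two]

lemma exists_ltil_succ_eq_add (n : ℕ) : ∃ e, ltil (n + 1) = ltil n + ltil e :=
  match n with
  | 0 | 1 | 2 => ⟨0, rfl⟩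
  | n + 3 => ⟨n + 2, ltil_add_two (by omega)⟩

lemma ltil_pos (n : ℕ) : 0 < ltil n :=
  match n with
  | 0 | 1 => by decide
  | n + 2 => lucas_pos _

lemma ltil_strictMono : StrictMono ltil := by
  refine strictMono_nat_of_lt_succ fun n => ?_
  obtain ⟨e, he⟩ := exists_ltil_succ_eq_add n
  have := ltil_pos e
  omega

lemma range_lucas_eq_range_ltil : Set.range lucas = Set.range ltil := by
  ext x
  constructor
  · rintro ⟨n, rfl⟩
    match n with
    | 0 => exact ⟨1, rfl⟩
    | 1 => exact ⟨0, rfl⟩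
    | n + 2 => exact ⟨n + 2, rfl⟩
  · rintro ⟨n, rfl⟩
    match n with
    | 0 => exact ⟨1, rfl⟩
    | 1 => exact ⟨0, rfl⟩
    | n + 2 => exact ⟨n + 2, rfl⟩

lemma beta_eq_sInf (x : ℕ) :
    beta x = sInf {s | ∃ M : Multiset ℕ, card M = s ∧ (M.map ltil).sum = x} := by
  classical
  unfold beta
  congr 1
  ext s
  constructor
  · rintro ⟨k, b, rfl, rfl⟩
    refine ⟨(Finset.range (k + 1)).val.bind fun i => replicate (b i) i, ?_, ?_⟩
    · simp [card_bind, Finset.sum]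
    · simp [map_bind, sum_bind, Finset.sum]
  · rintro ⟨M, rfl, rfl⟩
    have hM : ∀ j ∈ M, j ∈ Finset.range (M.sum + 1) :=
      fun j hj => Finset.mem_range_succ_iff.2 (le_sum_of_mem hj)
    refine ⟨M.sum, fun i => M.count i, ?_, (sum_count_eq_card hM).symm⟩
    rw [Finset.sum_multiset_map_count, Finset.sum_subset (fun j hj => hM j (mem_toFinset.1 hj))]
    · simp
    · intro j _ hj
      simp_all

lemma beta_le_card (M : Multiset ℕ) : beta (M.map ltil).sum ≤ card M :=
  (beta_eq_sInf _).trans_le (Nat.sInf_le ⟨M, rfl, rfl⟩)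

lemma exists_card_eq_beta (x : ℕ) :
    ∃ M : Multiset ℕ, card M = beta x ∧ (M.map ltil).sum = x := by
  have hne : {s | ∃ M : Multiset ℕ, card M = s ∧ (M.map ltil).sum = x}.Nonempty :=
    ⟨x, replicate x 0, card_replicate x 0, by simp [ltil]⟩
  rw [beta_eq_sInf]
  exact Nat.sInf_mem hne

lemma beta_zero : beta 0 = 0 :=
  Nat.le_zero.1 (by simpa using beta_le_card 0)

lemma one_le_beta {x : ℕ} (hx : x ≠ 0) : 1 ≤ beta x := by
  obtain ⟨M, hM, rfl⟩ := exists_card_eq_beta x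
  rw [← hM, Nat.one_le_iff_ne_zero]
  rintro h
  simp [card_eq_zero.1 h] at hx

lemma beta_add_le (x y : ℕ) : beta (x + y) ≤ beta x + beta y := by
  obtain ⟨M, hM, rfl⟩ := exists_card_eq_beta x
  obtain ⟨N, hN, rfl⟩ := exists_card_eq_beta y
  simpa [hM, hN] using beta_le_card (M + N)

lemma beta_ltil_le_one (j : ℕ) : beta (ltil j) ≤ 1 := by
  simpa using beta_le_card {j}

lemma two_le_beta {x : ℕ} (hx : x ≠ 0) (hx' : x ∉ Set.range ltil) : 2 ≤ beta x := by
  obtain ⟨M, hM, rfl⟩ := exists_card_eq_beta x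
  by_contra! h
  obtain ⟨j, rfl⟩ := card_eq_one.1 (le_antisymm (Nat.le_of_lt_succ (hM ▸ h)) (hM ▸ one_le_beta hx))
  exact hx' ⟨j, by simp⟩

lemma beta_add_ltil_le (x j : ℕ) : beta (x + ltil j) ≤ beta x + 1 :=
  (beta_add_le _ _).trans (Nat.add_le_add_left (beta_ltil_le_one j) _)

lemma beta_lucas_le_one (n : ℕ) : beta (lucas n) ≤ 1 := by
  obtain ⟨j, hj⟩ : lucas n ∈ Set.range ltil := range_lucas_eq_range_ltil ▸ ⟨n, rfl⟩
  exact hj ▸ beta_ltil_le_one j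

def GreedyOptimalAt (w : ℕ) : Prop :=
  ∀ k, ltil k ≤ w → w < ltil (k + 1) → beta (w - ltil k) + 1 ≤ beta w

lemma GreedyOptimalAt.beta_sub_ltil_le {w k : ℕ} (hG : GreedyOptimalAt w) (h₁ : ltil k ≤ w)
    (h₂ : w < ltil (k + 2)) : beta (w - ltil k) ≤ beta w := by
  rcases lt_or_ge w (ltil (k + 1)) with h | h
  · exact (Nat.le_succ _).trans (hG k h₁ h)
  · obtain ⟨e, he⟩ := exists_ltil_succ_eq_add k
    calc beta (w - ltil k) = beta (w - ltil (k + 1) + ltil e) := by congr 1; omega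
      _ ≤ beta (w - ltil (k + 1)) + 1 := beta_add_ltil_le _ _
      _ ≤ beta w := hG (k + 1) h h₂

lemma greedyOptimalAt_of_lt_seven {w : ℕ} (hw : w < 7) : GreedyOptimalAt w := by
  intro k hkw hwk
  by_cases hrange : w ∈ Set.range ltil
  · obtain ⟨j, rfl⟩ := hrange
    obtain rfl : j = k := le_antisymm (Nat.lt_succ_iff.1 (ltil_strictMono.lt_iff_lt.1 hwk))
      (ltil_strictMono.le_iff_le.1 hkw)
    simpa [beta_zero] using one_le_beta (ltil_pos j).ne'
  · have hsmall : ∀ w < 7, ∀ k ≤ 3, ltil k ≤ w → w < ltil (k + 1) →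
        w = ltil k ∨ w - ltil k = ltil 0 ∨ w - ltil k = ltil 1 := by decide
    have hk : k ≤ 3 := by
      by_contra! hk
      have : ltil 4 ≤ ltil k := ltil_strictMono.monotone hk
      have : ltil 4 = 7 := rfl
      omega
    have h₂ : 2 ≤ beta w := two_le_beta ((ltil_pos k).trans_le hkw).ne' hrange
    rcases hsmall w hw k hk hkw hwk with h | h | h
    · exact absurd ⟨k, h.symm⟩ hrange
    all_goals have := h ▸ beta_ltil_le_one _; omega

lemma beta_sub_ltil_add_one_le_card {K : ℕ} (hK : 3 ≤ K)
    (hG : ∀ v < ltil (K + 1), GreedyOptimalAt v) (M : Multiset ℕ) (hM : ∀ j ∈ M, j ≤ K)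
    (hKM : ltil K ≤ (M.map ltil).sum) : beta ((M.map ltil).sum - ltil K) + 1 ≤ card M := by
  induction M using Multiset.induction_on with
  | empty => simpa using (ltil_pos K).trans_le hKM
  | cons j M ih =>
    simp only [map_cons, sum_cons, card_cons] at hKM ⊢
    rcases (hM j (mem_cons_self j M)).lt_or_eq with hj | rfl
    · rcases le_or_gt (ltil K) (M.map ltil).sum with hKM' | hKM'
      · have := ih (fun i hi => hM i (mem_cons_of_mem hi)) hKM'
        calc beta (ltil j + (M.map ltil).sum - ltil K) + 1
            = beta ((M.map ltil).sum - ltil K + ltil j) + 1 := by congr 2; omega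
          _ ≤ card M + 1 := by have := beta_add_ltil_le ((M.map ltil).sum - ltil K) j; omega
      · have hlt : ltil j + (M.map ltil).sum < ltil (K + 1) := by
          have hrec := ltil_add_two (show 2 ≤ K - 1 by omega)
          rw [show K - 1 + 2 = K + 1 by omega, show K - 1 + 1 = K by omega] at hrec
          have := ltil_strictMono.monotone (show j ≤ K - 1 by omega)
          omega
        calc _ ≤ beta (ltil j + (M.map ltil).sum) := hG _ hlt K hKM hlt
          _ ≤ card M + 1 := by simpa using beta_le_card (j ::ₘ M)
    · simpa using beta_le_card M

lemma greedyOptimalAt_of_forall_lt {w : ℕ} (hG : ∀ v < w, GreedyOptimalAt v) :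
    GreedyOptimalAt w := by
  intro k hkw hwk
  rcases lt_or_ge k 4 with hk | hk
  · have : ltil (k + 1) ≤ ltil 4 := ltil_strictMono.monotone hk
    exact greedyOptimalAt_of_lt_seven (hwk.trans_le this) k hkw hwk
  obtain ⟨m, rfl⟩ := Nat.exists_eq_add_of_le' hk
  obtain ⟨M, hM, rfl⟩ := exists_card_eq_beta w
  have hle : ∀ j ∈ M, j ≤ m + 4 := fun j hj => Nat.lt_succ_iff.1 <|
    ltil_strictMono.lt_iff_lt.1 ((le_sum_of_mem (mem_map_of_mem ltil hj)).trans_lt hwk)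
  by_cases hmem : m + 4 ∈ M
  · obtain ⟨M', rfl⟩ := exists_cons_of_mem hmem
    rw [← hM]
    simpa using beta_le_card M'
  have hrec₁ : ltil (m + 4) = ltil (m + 3) + ltil (m + 2) := ltil_add_two (by omega)
  have hrec₂ : ltil (m + 4 + 1) = ltil (m + 4) + ltil (m + 3) := ltil_add_two (by omega)
  have hpos := ltil_pos (m + 2)
  set w := (M.map ltil).sum
  set v := w - ltil (m + 3)
  have hv : beta v + 1 ≤ beta w := hM ▸ beta_sub_ltil_add_one_le_card (by omega)
    (fun v hv => hG v (hv.trans_le hkw)) M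
    (fun j hj => Nat.lt_succ_iff.1 ((hle j hj).lt_of_ne fun h => hmem (h ▸ hj))) (by omega)
  have hv' : beta (v - ltil (m + 2)) ≤ beta v :=
    (hG v (by omega)).beta_sub_ltil_le (by omega) (show v < ltil (m + 4) by omega)
  rw [show w - ltil (m + 4) = v - ltil (m + 2) by omega]
  omega

theorem greedyOptimalAt (w : ℕ) : GreedyOptimalAt w := by
  induction w using Nat.strong_induction_on with
  | _ w ih => exact greedyOptimalAt_of_forall_lt ih

lemma lucas_lt_lucas {a j : ℕ} (ha : 2 ≤ a) (hj : j < a) : lucas j < lucas a := by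
  have h3 : ltil 2 ≤ lucas a := ltil_eq_lucas ha ▸ ltil_strictMono.monotone ha
  match j with
  | 0 | 1 => exact lt_of_lt_of_le (by decide) h3
  | j + 2 => rw [← ltil_eq_lucas ha, ← ltil_eq_lucas (by omega)]; exact ltil_strictMono hj

lemma beta_add_mod_le {a : ℕ} (ha : 2 ≤ a) (x y : ℕ) :
    beta ((x + y) % lucas a) ≤ beta (x % lucas a) + beta (y % lucas a) := by
  have hn := lucas_pos a
  have hx := Nat.mod_lt x hn
  have hy := Nat.mod_lt y hn
  rw [Nat.add_mod]
  rcases lt_or_ge (x % lucas a + y % lucas a) (lucas a) with h | h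
  · rw [Nat.mod_eq_of_lt h]
    exact beta_add_le _ _
  · have hrec := ltil_add_two ha
    have hmono := ltil_strictMono (show a < a + 1 by omega)
    rw [ltil_eq_lucas ha] at hrec hmono
    rw [Nat.mod_eq_sub_mod h, Nat.mod_eq_of_lt (by omega)]
    calc _ ≤ beta (x % lucas a + y % lucas a) := by
          simpa [ltil_eq_lucas ha] using
            (greedyOptimalAt _).beta_sub_ltil_le (k := a) (by rwa [ltil_eq_lucas ha]) (by omega)
      _ ≤ _ := beta_add_le _ _

lemma beta_mul_mod_le {a : ℕ} (ha : 2 ≤ a) (t x : ℕ) :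
    beta (t * x % lucas a) ≤ t * beta (x % lucas a) := by
  induction t with
  | zero => simp [beta_zero]
  | succ t ih =>
    rw [Nat.succ_mul, Nat.succ_mul]
    exact (beta_add_mod_le ha _ _).trans (Nat.add_le_add_right ih _)

lemma beta_lucas_mod_le {a : ℕ} (ha : 2 ≤ a) (j : ℕ) :
    beta (lucas j % lucas a) ≤ lucas j / lucas a + 1 := by
  rcases lt_or_ge j a with hj | hj
  · rw [Nat.mod_eq_of_lt (lucas_lt_lucas ha hj)]
    exact (beta_lucas_le_one j).trans (Nat.le_add_left _ _)
  obtain ⟨m, rfl⟩ : ∃ m, j = m + (a - 1) + 1 := ⟨j - a, by omega⟩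
  have hprev := lucas_lt_lucas ha (show a - 1 < a by omega)
  rw [lucas_add, Nat.sub_add_cancel (by omega), Nat.add_mul_mod_self_right,
    Nat.add_mul_div_right _ _ (lucas_pos a)]
  calc beta (Nat.fib m * lucas (a - 1) % lucas a)
      ≤ Nat.fib m * beta (lucas (a - 1) % lucas a) := beta_mul_mod_le ha _ _
    _ ≤ Nat.fib m := by
      rw [Nat.mod_eq_of_lt hprev]
      exact mul_le_of_le_one_right (Nat.zero_le _) (beta_lucas_le_one _)
    _ ≤ Nat.fib (m + 1) := Nat.fib_le_fib_succ
    _ ≤ _ := Nat.le_succ_of_le le_add_self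

lemma beta_mod_mul_add_mod_le_of_mem_Sset {a s : ℕ} (ha : 2 ≤ a) (hs : s ∈ Sset a) :
    beta (s % lucas a) * lucas a + s % lucas a ≤ s := by
  induction hs using AddSubmonoid.closure_induction with
  | mem x hx =>
    rcases hx with rfl | ⟨j, rfl⟩
    · simp [beta_zero]
    · rw [Nat.add_mod_left]
      have := Nat.div_add_mod (lucas j) (lucas a)
      have := Nat.mul_le_mul_right (lucas a) (beta_lucas_mod_le ha j)
      nlinarith
  | zero => simp [beta_zero]
  | add x y _ _ hx hy =>
    have := Nat.mul_le_mul_right (lucas a) (beta_add_mod_le ha x y)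
    have : (x + y) % lucas a ≤ x % lucas a + y % lucas a := Nat.add_mod x y _ ▸ Nat.mod_le _ _
    nlinarith

lemma card_mul_add_sum_mem_Sset (a : ℕ) (M : Multiset ℕ) :
    card M * lucas a + (M.map ltil).sum ∈ Sset a := by
  induction M using Multiset.induction_on with
  | empty => simp
  | cons j M ih =>
    obtain ⟨i, hi⟩ : ltil j ∈ Set.range lucas := range_lucas_eq_range_ltil ▸ ⟨j, rfl⟩
    have hgen : lucas a + ltil j ∈ Sset a := AddSubmonoid.subset_closure (Or.inr ⟨i, hi ▸ rfl⟩)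
    convert add_mem hgen ih using 1
    simp only [card_cons, map_cons, sum_cons]
    ring

theorem apery_S (a : ℕ) (ha : 2 ≤ a) (x : ℕ) (hx : x < lucas a) :
    IsLeast {s : ℕ | s ∈ Sset a ∧ s ≡ x [MOD lucas a]} (beta x * lucas a + x) := by
  refine ⟨⟨?_, by simp [Nat.ModEq]⟩, fun s ⟨hs, hsx⟩ => ?_⟩
  · obtain ⟨M, hM, hMx⟩ := exists_card_eq_beta x
    rw [← hM, ← hMx]
    exact card_mul_add_sum_mem_Sset a M
  · have h := beta_mod_mul_add_mod_le_of_mem_Sset ha hs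
    rwa [hsx, Nat.mod_eq_of_lt hx] at h
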